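/- If Ψ is a coalition partition of a graph G and v is any vertex of G, then the vertex cover number of the coalition graph CG(G, Ψ) is at most deg_G(v) + 1. -/

import Mathlib

open SimpleGraph

attribute [local instance] Classical.propDecidable

def Dominates {V : Type*} (G : SimpleGraph V) (S : Set V) : Prop :=
  ∀ v, v ∉ S → ∃ u ∈ S, G.Adj u v

def Coalition {V : Type*} (G : SimpleGraph V) (A B : Set V) : Prop :=
  Disjoint A B ∧ ¬ Dominates G A ∧ ¬ Dominates G B ∧ Dominates G (A ∪ B)

def IsCoalitionPartition {V : Type*} (G : SimpleGraph V) (P : Finset (Set V)) : Prop :=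
  (∀ A ∈ P, A.Nonempty) ∧
  (∀ A ∈ P, ∀ B ∈ P, A ≠ B → Disjoint A B) ∧
  (∀ v : V, ∃ A ∈ P, v ∈ A) ∧
  (∀ A ∈ P, (Dominates G A ∧ ∃ v, A = {v}) ∨
    (¬ Dominates G A ∧ ∃ B ∈ P, B ≠ A ∧ Coalition G A B))

noncomputable def coalitionNumber {V : Type*} (G : SimpleGraph V) : ℕ :=
  sSup {n | ∃ P : Finset (Set V), IsCoalitionPartition G P ∧ P.card = n}

def coalitionGraph {V : Type*} (G : SimpleGraph V) (P : Finset (Set V)) :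
    SimpleGraph {A : Set V // A ∈ P} where
  Adj A B := Coalition G A.1 B.1
  symm := by
    constructor
    rintro A B ⟨d, na, nb, u⟩
    exact ⟨d.symm, nb, na, by rwa [Set.union_comm]⟩
  loopless := by
    constructor
    rintro ⟨A, hA⟩ ⟨d, na, nb, u⟩
    rw [Set.union_self] at u
    exact na u

/-- A set of vertices meeting every edge of `H`. -/
def IsVertexCover {W : Type*} (H : SimpleGraph W) (C : Set W) : Prop :=
  ∀ a b, H.Adj a b → a ∈ C ∨ b ∈ C

/-- The vertex cover number: minimum cardinality of a vertex cover. -/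
noncomputable def vertexCoverNumber {W : Type*} (H : SimpleGraph W) : ℕ :=
  sInf {n | ∃ C : Finset W, _root_.IsVertexCover H (↑C) ∧ C.card = n}

/-
The parts of Ψ meeting the closed neighbourhood N[v] cover every edge of the coalition graph:
the union of two parts in coalition dominates G, so it meets N[v]. Distinct parts are disjoint,
so each vertex of N[v] lies in at most one such part, and there are at most deg v + 1 of them.
-/

theorem vertexCoverNumber_le_card {W : Type*} {H : SimpleGraph W} {C : Finset W}
    (hC : _root_.IsVertexCover H ↑C) : vertexCoverNumber H ≤ C.card :=
  Nat.sInf_le ⟨C, hC, rfl⟩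

section

variable {V : Type*} {G : SimpleGraph V}

theorem Dominates.inter_closedNeighborSet_nonempty {S : Set V} (hS : Dominates G S) (v : V) :
    (S ∩ insert v (G.neighborSet v)).Nonempty := by
  by_cases hv : v ∈ S
  · exact ⟨v, hv, Set.mem_insert v _⟩
  · obtain ⟨u, hu, huv⟩ := hS v hv
    exact ⟨u, hu, Set.mem_insert_of_mem v huv.symm⟩

theorem isVertexCover_coalitionGraph_of_forall_dominates {P : Finset (Set V)} {T : Set V}
    (hT : ∀ S, Dominates G S → (S ∩ T).Nonempty) :
    _root_.IsVertexCover (coalitionGraph G P) {A | (A.1 ∩ T).Nonempty} := by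
  rintro A B ⟨-, -, -, hAB⟩
  obtain ⟨u, hu | hu, huT⟩ := hT _ hAB
  · exact Or.inl ⟨u, hu, huT⟩
  · exact Or.inr ⟨u, hu, huT⟩

theorem card_le_of_forall_inter_nonempty {P : Finset (Set V)}
    (hdisj : ∀ A ∈ P, ∀ B ∈ P, A ≠ B → Disjoint A B) {C : Finset {A // A ∈ P}} {N : Finset V}
    (hC : ∀ A ∈ C, (A.1 ∩ ↑N).Nonempty) : C.card ≤ N.card := by
  refine Finset.card_le_card_of_forall_subsingleton (fun A u => u ∈ A.1) ?_ ?_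
  · intro A hA
    obtain ⟨u, huA, huN⟩ := hC A hA
    exact ⟨u, huN, huA⟩
  · rintro u - A ⟨-, huA⟩ B ⟨-, huB⟩
    by_contra hAB
    exact Set.disjoint_left.mp (hdisj _ A.2 _ B.2 fun h => hAB (Subtype.ext h)) huA huB

end

theorem stmt2 {V : Type*} [Fintype V] (G : SimpleGraph V) (P : Finset (Set V))
    (hP : IsCoalitionPartition G P) (v : V) :
    vertexCoverNumber (coalitionGraph G P) ≤ G.degree v + 1 := by
  set N := insert v (G.neighborFinset v)
  have hN : (↑N : Set V) = insert v (G.neighborSet v) := by simp [N]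
  set C := P.attach.filter fun A => (A.1 ∩ ↑N).Nonempty
  have hcover : _root_.IsVertexCover (coalitionGraph G P) ↑C := by
    intro A B hAB
    have := isVertexCover_coalitionGraph_of_forall_dominates (P := P) (T := ↑N)
      (fun S hS => hN ▸ hS.inter_closedNeighborSet_nonempty v) A B hAB
    simpa [C] using this
  calc vertexCoverNumber (coalitionGraph G P) ≤ C.card := vertexCoverNumber_le_card hcover
    _ ≤ N.card := card_le_of_forall_inter_nonempty hP.2.1 fun A hA => (Finset.mem_filter.mp hA).2
    _ ≤ G.degree v + 1 := by
      rw [← G.card_neighborFinset_eq_degree]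
      exact Finset.card_insert_le _ _
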